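/- Let T > 0, α ∈ (0,2), 𝔠_p > 0, 𝔪_p > 0, x₀ ∈ ℝ, ε ∈ (0,α) and 𝔠_b > 0. Let p : (0,T] × ℝ → [0,∞) be measurable with p(s,x) ≤ 𝔠_p [ s^{-1/2} exp(−𝔪_p (x−x₀)²/s) + s/(s^{1/2} + |x−x₀|)^{1+α} ] for all s ∈ (0,T] and x ∈ ℝ, and let b : ℝ → ℝ be measurable with |b(x)| ≤ 𝔠_b (1 + |x|)^{(α−ε)/4} for every x ∈ ℝ. Then ∫_ℝ b(x)⁴ f_T(x) dx < ∞, i.e. the function (s,x) ↦ b(x)⁴ p(s,x) is integrable on (0,T] × ℝ. -/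

import Mathlib

open MeasureTheory Set Real

/-!
For `s ≤ T` the Gaussian term is at most `s^{-1/2} e^{-𝔪_p y²/T}` (with `y = x - x₀`), and, writing
`s = (√s)²` and using `√s / (√s + |y|) ≤ (1 + √s) / (1 + |y|)`, the polynomial term is at most
`(1 + √T)^{1+α} s^{(1-α)/2} (1 + |y|)^{-1-α}`. Together with
`b(x)⁴ ≲ (1 + |x|)^{α-ε} ≤ (1 + |x₀|)^{α-ε} (1 + |y|)^{α-ε}`, the integrand is dominated by a sum of
two products `φ(s) ψ(y)`: the time factors `s^{-1/2}`, `s^{(1-α)/2}` are integrable on `(0,T]`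
since `α < 2`, and the space factors `(1 + |y|)^{α-ε} e^{-𝔪_p y²/T}` and `(1 + |y|)^{-1-ε}` are
integrable on `ℝ`. Integrating out `s` then gives the statement about `f_T`.
-/

lemma one_add_abs_rpow_le_mul {r : ℝ} (hr : 0 ≤ r) (x x₀ : ℝ) :
    (1 + |x|) ^ r ≤ (1 + |x₀|) ^ r * (1 + |x - x₀|) ^ r := by
  have h : 1 + |x| ≤ (1 + |x₀|) * (1 + |x - x₀|) := by
    have := abs_sub_abs_le_abs_sub x x₀
    nlinarith [abs_nonneg x₀, abs_nonneg (x - x₀)]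
  rw [← mul_rpow (by positivity) (by positivity)]
  exact rpow_le_rpow (by positivity) h hr

lemma integrableOn_Ioc_rpow {r : ℝ} (hr : -1 < r) (T : ℝ) :
    IntegrableOn (fun s : ℝ => s ^ r) (Ioc 0 T) :=
  (intervalIntegral.intervalIntegrable_rpow' hr).def'.mono_set Ioc_subset_uIoc

lemma integrable_one_add_abs_rpow_neg {r : ℝ} (hr : 1 < r) :
    Integrable (fun y : ℝ => (1 + |y|) ^ (-r)) :=
  integrable_one_add_norm (E := ℝ) (by simpa using hr)

lemma integrable_one_add_abs_rpow_mul_exp_neg_mul_sq {r c : ℝ} (hr : r ≤ 2) (hc : 0 < c) :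
    Integrable (fun y : ℝ => (1 + |y|) ^ r * exp (-c * y ^ 2)) := by
  have hsq : Integrable (fun y : ℝ => y ^ (2:ℝ) * exp (-c * y ^ 2)) :=
    integrable_rpow_mul_exp_neg_mul_sq hc (by norm_num)
  refine (((integrable_exp_neg_mul_sq hc).add hsq).const_mul 2).mono' (by fun_prop) ?_
  refine Filter.Eventually.of_forall fun y => ?_
  have hy : (1 + |y|) ^ r ≤ 2 * (1 + y ^ 2) :=
    calc (1 + |y|) ^ r ≤ (1 + |y|) ^ (2:ℝ) :=
          rpow_le_rpow_of_exponent_le (by simp) hr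
      _ ≤ 2 * (1 + y ^ 2) := by
          rw [rpow_two]; nlinarith [sq_abs y, sq_nonneg (1 - |y|)]
  rw [norm_of_nonneg (by positivity), Pi.add_apply, rpow_two]
  nlinarith [exp_pos (-c * y ^ 2)]

lemma exp_neg_mul_sq_div_le {m s T : ℝ} (hm : 0 ≤ m) (hs : s ∈ Ioc 0 T) (y : ℝ) :
    exp (-(m * y ^ 2) / s) ≤ exp (-(m / T) * y ^ 2) := by
  rw [exp_le_exp, neg_div, neg_mul, neg_le_neg_iff, div_mul_eq_mul_div]
  exact div_le_div_of_nonneg_left (by positivity) hs.1 hs.2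

lemma div_sqrt_add_rpow_le {s T u a : ℝ} (hs : s ∈ Ioc 0 T) (hu : 0 ≤ u) (ha : 0 ≤ a) :
    s / (s ^ ((1:ℝ)/2) + u) ^ a ≤ (1 + T ^ ((1:ℝ)/2)) ^ a * s ^ ((2 - a)/2) * (1 + u) ^ (-a) := by
  obtain ⟨hs0, hsT⟩ := hs
  set c := s ^ ((1:ℝ)/2) with hc
  have hc0 : 0 < c := rpow_pos_of_pos hs0 _
  have hratio : c / (c + u) ≤ (1 + c) / (1 + u) := by
    rw [div_le_div_iff₀ (by positivity) (by positivity)]; nlinarith [mul_self_nonneg c]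
  have hcT : c ≤ T ^ ((1:ℝ)/2) := rpow_le_rpow hs0.le hsT (by norm_num)
  have hsc : s = c ^ (2:ℝ) := by rw [hc, ← rpow_mul hs0.le]; norm_num
  calc s / (c + u) ^ a = c ^ (2 - a) * (c / (c + u)) ^ a := by
        rw [div_rpow hc0.le (by positivity), hsc, rpow_sub hc0]; field_simp
    _ ≤ c ^ (2 - a) * ((1 + c) / (1 + u)) ^ a := by gcongr
    _ = (1 + c) ^ a * s ^ ((2 - a) / 2) * (1 + u) ^ (-a) := by
        rw [div_rpow (by positivity) (by positivity), rpow_neg (by positivity), hc,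
          ← rpow_mul hs0.le]
        ring_nf
    _ ≤ (1 + T ^ ((1:ℝ)/2)) ^ a * s ^ ((2 - a)/2) * (1 + u) ^ (-a) := by gcongr

section Prod

variable {X Y : Type*} [MeasurableSpace X] [MeasurableSpace Y] {μ : Measure X} {ν : Measure Y}
  [SFinite μ] [SFinite ν] {S : Set X}

lemma IntegrableOn.mul_prod_univ {φ : X → ℝ} {ψ : Y → ℝ} (hφ : IntegrableOn φ S μ)
    (hψ : Integrable ψ ν) :
    IntegrableOn (fun q : X × Y => φ q.1 * ψ q.2) (S ×ˢ univ) (μ.prod ν) := by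
  rw [IntegrableOn, ← Measure.prod_restrict, Measure.restrict_univ]
  exact hφ.mul_prod hψ

lemma IntegrableOn.integrable_mul_setIntegral {g : Y → ℝ} {p : X → Y → ℝ}
    (h : IntegrableOn (fun q : X × Y => g q.2 * p q.1 q.2) (S ×ˢ univ) (μ.prod ν)) :
    Integrable (fun x => g x * ∫ s in S, p s x ∂μ) ν := by
  rw [IntegrableOn, ← Measure.prod_restrict, Measure.restrict_univ] at h
  simpa only [integral_const_mul] using h.integral_prod_right

end Prod

lemma one_add_abs_rpow_mul_density_bound_le {T α ε m s : ℝ} (hm : 0 ≤ m) (hs : s ∈ Ioc 0 T)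
    (hα : -1 ≤ α) (y : ℝ) :
    (1 + |y|) ^ (α - ε) * (s ^ (-(1:ℝ)/2) * exp (-(m * y ^ 2) / s)
        + s / (s ^ ((1:ℝ)/2) + |y|) ^ (1 + α))
      ≤ s ^ (-(1:ℝ)/2) * ((1 + |y|) ^ (α - ε) * exp (-(m / T) * y ^ 2))
        + (1 + T ^ ((1:ℝ)/2)) ^ (1 + α) * s ^ ((1 - α)/2) * (1 + |y|) ^ (-(1 + ε)) := by
  have htail := div_sqrt_add_rpow_le hs (abs_nonneg y) (by linarith : 0 ≤ 1 + α)
  have hexp := exp_neg_mul_sq_div_le hm hs y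
  have hs0 := hs.1
  calc _ ≤ (1 + |y|) ^ (α - ε) * (s ^ (-(1:ℝ)/2) * exp (-(m / T) * y ^ 2)
        + (1 + T ^ ((1:ℝ)/2)) ^ (1 + α) * s ^ ((2 - (1 + α))/2) * (1 + |y|) ^ (-(1 + α))) := by
        gcongr
    _ = _ := by
        rw [show (2 - (1 + α))/2 = (1 - α)/2 by ring, show -(1 + ε) = (α - ε) + -(1 + α) by ring,
          rpow_add (by positivity : (0:ℝ) < 1 + |y|)]
        ring

lemma drift_pow_four_mul_density_le {T α ε cp mp x₀ cb s x β q : ℝ} (hcp : 0 ≤ cp)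
    (hmp : 0 ≤ mp) (hεα : ε ≤ α) (hα : -1 ≤ α) (hs : s ∈ Ioc 0 T) (hq0 : 0 ≤ q)
    (hq : q ≤ cp * (s ^ (-(1:ℝ)/2) * exp (-(mp * (x - x₀) ^ 2) / s)
        + s / (s ^ ((1:ℝ)/2) + |x - x₀|) ^ (1 + α)))
    (hβ : |β| ≤ cb * (1 + |x|) ^ ((α - ε)/4)) :
    β ^ 4 * q ≤ cb ^ 4 * (1 + |x₀|) ^ (α - ε) * cp *
      (s ^ (-(1:ℝ)/2) * ((1 + |x - x₀|) ^ (α - ε) * exp (-(mp / T) * (x - x₀) ^ 2))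
        + (1 + T ^ ((1:ℝ)/2)) ^ (1 + α) * s ^ ((1 - α)/2) * (1 + |x - x₀|) ^ (-(1 + ε))) := by
  have hβ4 : β ^ 4 ≤ cb ^ 4 * (1 + |x|) ^ (α - ε) :=
    calc β ^ 4 = |β| ^ 4 := (Even.pow_abs ⟨2, rfl⟩ β).symm
      _ ≤ (cb * (1 + |x|) ^ ((α - ε)/4)) ^ 4 := pow_le_pow_left₀ (abs_nonneg β) hβ 4
      _ = cb ^ 4 * (1 + |x|) ^ (α - ε) := by
          rw [mul_pow, ← rpow_mul_natCast (by positivity)]; norm_num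
  have hw := one_add_abs_rpow_le_mul (by linarith : 0 ≤ α - ε) x x₀
  calc β ^ 4 * q
      ≤ cb ^ 4 * ((1 + |x₀|) ^ (α - ε) * (1 + |x - x₀|) ^ (α - ε)) *
          (cp * (s ^ (-(1:ℝ)/2) * exp (-(mp * (x - x₀) ^ 2) / s)
            + s / (s ^ ((1:ℝ)/2) + |x - x₀|) ^ (1 + α))) :=
        mul_le_mul (hβ4.trans (by gcongr)) hq hq0 (by positivity)
    _ = cb ^ 4 * (1 + |x₀|) ^ (α - ε) * cp * ((1 + |x - x₀|) ^ (α - ε) *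
          (s ^ (-(1:ℝ)/2) * exp (-(mp * (x - x₀) ^ 2) / s)
            + s / (s ^ ((1:ℝ)/2) + |x - x₀|) ^ (1 + α))) := by ring
    _ ≤ _ := by
        gcongr
        exact one_add_abs_rpow_mul_density_bound_le hmp hs hα (x - x₀)

theorem drift_fourth_moment_integrable_general (T α cp mp x₀ ε cb : ℝ) (hT : 0 < T)
    (hα2 : α < 2) (hcp : 0 < cp) (hmp : 0 < mp)
    (hε0 : 0 < ε) (hεα : ε < α)
    (p : ℝ → ℝ → ℝ) (hmeas : Measurable (Function.uncurry p))
    (hpos : ∀ s ∈ Set.Ioc (0:ℝ) T, ∀ x : ℝ, 0 ≤ p s x)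
    (hbound : ∀ s ∈ Set.Ioc (0:ℝ) T, ∀ x : ℝ,
      p s x ≤ cp * (s ^ (-(1:ℝ)/2) * Real.exp (-(mp * (x - x₀) ^ 2) / s)
        + s / (s ^ ((1:ℝ)/2) + |x - x₀|) ^ (1 + α)))
    (b : ℝ → ℝ) (hbmeas : Measurable b)
    (hb : ∀ x : ℝ, |b x| ≤ cb * (1 + |x|) ^ ((α - ε)/4)) :
    Integrable (fun x : ℝ =>
        b x ^ 4 * ((1 / T) * ∫ s in Set.Ioc (0:ℝ) T, p s x)) ∧
      IntegrableOn (fun q : ℝ × ℝ => b q.2 ^ 4 * p q.1 q.2)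
        (Set.Ioc 0 T ×ˢ Set.univ) := by
  have hα : -1 ≤ α := by linarith
  set C := cb ^ 4 * (1 + |x₀|) ^ (α - ε) * cp
  set K := (1 + T ^ ((1:ℝ)/2)) ^ (1 + α)
  have hgauss := (integrable_one_add_abs_rpow_mul_exp_neg_mul_sq (r := α - ε) (by linarith)
    (div_pos hmp hT)).comp_sub_right x₀
  have htail := (integrable_one_add_abs_rpow_neg (r := 1 + ε) (by linarith)).comp_sub_right x₀
  have hdom := (IntegrableOn.mul_prod_univ
      ((integrableOn_Ioc_rpow (r := -(1:ℝ)/2) (by norm_num) T).const_mul C) hgauss).add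
    (IntegrableOn.mul_prod_univ
      ((integrableOn_Ioc_rpow (r := (1 - α)/2) (by linarith) T).const_mul (C * K)) htail)
  have hF : IntegrableOn (fun q : ℝ × ℝ => b q.2 ^ 4 * p q.1 q.2) (Ioc 0 T ×ˢ univ) := by
    rw [Measure.volume_eq_prod]
    refine hdom.mono' ((hbmeas.comp measurable_snd).pow_const 4 |>.mul hmeas).aestronglyMeasurable
      (ae_restrict_of_forall_mem (measurableSet_Ioc.prod MeasurableSet.univ) ?_)
    rintro ⟨s, x⟩ ⟨hs, -⟩
    rw [norm_of_nonneg (mul_nonneg (by positivity) (hpos s hs x))]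
    refine (drift_pow_four_mul_density_le hcp.le hmp.le hεα.le hα hs (hpos s hs x)
      (hbound s hs x) (hb x)).trans_eq ?_
    simp only [Pi.add_apply, C, K]
    ring
  refine ⟨?_, hF⟩
  simpa only [mul_left_comm] using (IntegrableOn.integrable_mul_setIntegral hF).const_mul (1 / T)

/-- Under the Gaussian-plus-polynomial density bound with
`α ∈ (0,2)`, and for a measurable drift `b` with
`|b(x)| ≤ 𝔠_b (1 + |x|)^{(α−ε)/4}` (`ε ∈ (0,α)`), one has
`∫ b(x)⁴ f_T(x) dx < ∞`, i.e. `(s,x) ↦ b(x)⁴ p(s,x)` is integrable on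
`(0,T] × ℝ`, where `f_T(x) = (1/T) ∫₀ᵀ p(s,x) ds`. -/
theorem drift_fourth_moment_integrable (T α cp mp x₀ ε cb : ℝ) (hT : 0 < T)
    (hα0 : 0 < α) (hα2 : α < 2) (hcp : 0 < cp) (hmp : 0 < mp)
    (hε0 : 0 < ε) (hεα : ε < α) (hcb : 0 < cb)
    (p : ℝ → ℝ → ℝ) (hmeas : Measurable (Function.uncurry p))
    (hpos : ∀ s ∈ Set.Ioc (0:ℝ) T, ∀ x : ℝ, 0 ≤ p s x)
    (hbound : ∀ s ∈ Set.Ioc (0:ℝ) T, ∀ x : ℝ,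
      p s x ≤ cp * (s ^ (-(1:ℝ)/2) * Real.exp (-(mp * (x - x₀) ^ 2) / s)
        + s / (s ^ ((1:ℝ)/2) + |x - x₀|) ^ (1 + α)))
    (b : ℝ → ℝ) (hbmeas : Measurable b)
    (hb : ∀ x : ℝ, |b x| ≤ cb * (1 + |x|) ^ ((α - ε)/4)) :
    Integrable (fun x : ℝ =>
        b x ^ 4 * ((1 / T) * ∫ s in Set.Ioc (0:ℝ) T, p s x)) ∧
      IntegrableOn (fun q : ℝ × ℝ => b q.2 ^ 4 * p q.1 q.2)
        (Set.Ioc 0 T ×ˢ Set.univ) :=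
  drift_fourth_moment_integrable_general T α cp mp x₀ ε cb hT hα2 hcp hmp hε0 hεα p hmeas hpos
    hbound b hbmeas hb
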